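/- Let V be a Hilbert space with orthonormal vectors ρ₁,...,ρ_M ∈ V and linear functionals τ₁,...,τ_M ∈ V* such that the matrix A with entries A_{ij} = τᵢ(ρⱼ) is upper triangular with nonzero diagonal entries. Then for every v ∈ V there exists a unique coefficient vector σ ∈ ℝ^M solving τᵢ(Σⱼ σⱼρⱼ) = τᵢ(v) for all i = 1,...,M, and the EIM interpolant I(v) = Σⱼ σⱼρⱼ satisfies τᵢ(I(v)) = τᵢ(v) for all i; moreover I is a linear projection: I(I(v)) = I(v). -/

import Mathlib

/-!
The interpolation matrix `(τᵢ(ρⱼ))` is triangular with nonzero diagonal, hence invertible, so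
`σ ↦ (τᵢ(∑ⱼ σⱼ ρⱼ))ᵢ` is a bijection: surjectivity gives existence of the coefficients,
injectivity gives their uniqueness and the idempotency of the interpolant.
-/

namespace Interpolation

open Matrix

variable {K V ι : Type*} [Field K] [AddCommGroup V] [Module K V] [Fintype ι]

def interpolationMatrix (τ : ι → Module.Dual K V) (ρ : ι → V) : Matrix ι ι K :=
  Matrix.of fun i j => τ i (ρ j)

theorem mulVec_interpolationMatrix (τ : ι → Module.Dual K V) (ρ : ι → V) :
    (interpolationMatrix τ ρ).mulVec = fun σ i => τ i (∑ j, σ j • ρ j) := by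
  ext σ i
  simp [interpolationMatrix, mulVec, dotProduct, mul_comm]

theorem isUnit_interpolationMatrix [LinearOrder ι] {τ : ι → Module.Dual K V} {ρ : ι → V}
    (htri : ∀ i j, i < j → τ i (ρ j) = 0) (hdiag : ∀ i, τ i (ρ i) ≠ 0) :
    IsUnit (interpolationMatrix τ ρ) := by
  have hlower : (interpolationMatrix τ ρ).IsLowerTriangular := fun i j hij => htri i j hij
  rw [isUnit_iff_isUnit_det, det_of_isLowerTriangular _ hlower]
  exact (Finset.prod_ne_zero_iff.2 fun i _ => hdiag i).isUnit

theorem bijective_of_isUnit_interpolationMatrix [DecidableEq ι] {τ : ι → Module.Dual K V}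
    {ρ : ι → V}
    (hA : IsUnit (interpolationMatrix τ ρ)) :
    Function.Bijective fun (σ : ι → K) i => τ i (∑ j, σ j • ρ j) := by
  rw [← mulVec_interpolationMatrix]
  exact ⟨mulVec_injective_iff_isUnit.2 hA, mulVec_surjective_iff_isUnit.2 hA⟩

end Interpolation

theorem eim_well_posed_general (V : Type*) [NormedAddCommGroup V]
    [InnerProductSpace ℝ V] (M : ℕ)
    (ρ : Fin M → V)
    (τ : Fin M → (V →L[ℝ] ℝ))
    (htri : ∀ i j : Fin M, i < j → τ i (ρ j) = 0)
    (hdiag : ∀ i : Fin M, τ i (ρ i) ≠ 0) :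
    (∀ v : V, ∃! σ : Fin M → ℝ, ∀ i, τ i (∑ j, σ j • ρ j) = τ i v) ∧
    (∀ (v : V) (σ σ' : Fin M → ℝ),
      (∀ i, τ i (∑ j, σ j • ρ j) = τ i v) →
      (∀ i, τ i (∑ j, σ' j • ρ j) = τ i (∑ j, σ j • ρ j)) →
      ∑ j, σ' j • ρ j = ∑ j, σ j • ρ j) := by
  have hbij := Interpolation.bijective_of_isUnit_interpolationMatrix
    (Interpolation.isUnit_interpolationMatrix (τ := fun i => (τ i : V →ₗ[ℝ] ℝ)) htri hdiag)
  refine ⟨fun v => ?_, fun v σ σ' _ hσ' => ?_⟩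
  · simpa [funext_iff] using hbij.existsUnique fun i => τ i v
  · rw [hbij.injective (funext hσ')]

/-- Well-posedness of the EIM linear system: with orthonormal basis functions
`ρ₁,…,ρ_M`, functionals `τ₁,…,τ_M`, and a triangular interpolation matrix
`(τᵢ(ρⱼ))` with nonzero diagonal, every `v` admits a unique coefficient vector
`σ` with `τᵢ(Σⱼ σⱼρⱼ) = τᵢ(v)` for all `i`; the resulting interpolation
operator is idempotent (a projection). -/
theorem eim_well_posed (V : Type*) [NormedAddCommGroup V]
    [InnerProductSpace ℝ V] [CompleteSpace V] (M : ℕ)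
    (ρ : Fin M → V) (hρ : Orthonormal ℝ ρ)
    (τ : Fin M → (V →L[ℝ] ℝ))
    (htri : ∀ i j : Fin M, i < j → τ i (ρ j) = 0)
    (hdiag : ∀ i : Fin M, τ i (ρ i) ≠ 0) :
    (∀ v : V, ∃! σ : Fin M → ℝ, ∀ i, τ i (∑ j, σ j • ρ j) = τ i v) ∧
    (∀ (v : V) (σ σ' : Fin M → ℝ),
      (∀ i, τ i (∑ j, σ j • ρ j) = τ i v) →
      (∀ i, τ i (∑ j, σ' j • ρ j) = τ i (∑ j, σ j • ρ j)) →
      ∑ j, σ' j • ρ j = ∑ j, σ j • ρ j) :=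
  eim_well_posed_general V M ρ τ htri hdiag
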